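/- Let n ≥ 1 and λ ∈ (0,1), and let d_j denote the Euclidean norm of the j-th column of C_λ. Then ∑_{j=1}^{n} d_j² + ∑_{j=1}^{n−1} (n − j)·(d_j − λ d_{j+1})² ≤ d_1² · (n + (1 − λ)²·n(n−1)/2). Consequently, under single participation (k = 1), the RMSE of the column-normalized DP-λCGD factorization (strategy matrix C_λ D^{-1}, which has sensitivity 1) is at most the RMSE of the unnormalized DP-λCGD factorization (strategy matrix C_λ, which has sensitivity d_1): ‖A D C_λ^{-1}‖_F ≤ d_1 · ‖A C_λ^{-1}‖_F. -/

import Mathlib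

open Finset

/-- Euclidean norm of a vector in `ℝⁿ`. -/
noncomputable def norm2 {n : ℕ} (v : Fin n → ℝ) : ℝ := Real.sqrt (∑ i, v i ^ 2)

/-- Frobenius norm of a square matrix. -/
noncomputable def frob {n : ℕ} (B : Matrix (Fin n) (Fin n) ℝ) : ℝ :=
  Real.sqrt (∑ i, ∑ j, B i j ^ 2)

/-- `‖B‖_{2→∞}`: the maximum Euclidean norm of a row of `B`. -/
noncomputable def rowMax {n : ℕ} (B : Matrix (Fin n) (Fin n) ℝ) : ℝ :=
  ⨆ i : Fin n, norm2 (fun j => B i j)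

/-- The `n × n` prefix-sum matrix: lower triangular, all entries on or below the diagonal are 1. -/
def Amat (n : ℕ) : Matrix (Fin n) (Fin n) ℝ :=
  fun i j => if (j : ℕ) ≤ (i : ℕ) then 1 else 0

/-- The DP-λCGD strategy matrix `C_λ`: lower triangular Toeplitz with `(C_λ)_{ij} = λ^{i-j}`. -/
noncomputable def Cmat (n : ℕ) (l : ℝ) : Matrix (Fin n) (Fin n) ℝ :=
  fun i j => if (j : ℕ) ≤ (i : ℕ) then l ^ ((i : ℕ) - (j : ℕ)) else 0

/-- The inverse `C_λ⁻¹`: ones on the diagonal, `-λ` on the first subdiagonal, zero elsewhere. -/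
noncomputable def Cinvmat (n : ℕ) (l : ℝ) : Matrix (Fin n) (Fin n) ℝ :=
  fun i j => if (i : ℕ) = (j : ℕ) then 1 else if (i : ℕ) = (j : ℕ) + 1 then -l else 0

/-- `sens_{k,b}(C)`: Euclidean norm of `∑_{j=0}^{k-1} C_{:,jb+1}` (columns 1-indexed, so the
column of 1-based index `j*b + 1` is the column of `Fin`-index `j*b`). -/
noncomputable def sens (n k b : ℕ) (C : Matrix (Fin n) (Fin n) ℝ) : ℝ :=
  norm2 (fun i => ∑ j ∈ Finset.range k, if h : j * b < n then C i ⟨j * b, h⟩ else 0)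

/-- `d_j`: Euclidean norm of the `j`-th column of `C_λ`. -/
noncomputable def dcol (n : ℕ) (l : ℝ) (j : Fin n) : ℝ :=
  norm2 (fun i => Cmat n l i j)

/-- The column-normalized DP-λCGD strategy matrix `C̃ = C_λ D⁻¹`. -/
noncomputable def Ctil (n : ℕ) (l : ℝ) : Matrix (Fin n) (Fin n) ℝ :=
  Cmat n l * (Matrix.diagonal (dcol n l))⁻¹

/-!
Column `j` of `A · diag(v) · C_λ⁻¹` has `v_j` in row `j` and `v_j - λ v_{j+1}` in each of the
`n - j - 1` rows below it, so `‖A diag(v) C_λ⁻¹‖_F² = ∑ v_j² + ∑ (n - j - 1)(v_j - λ v_{j+1})²`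
(indices from 0). For `v` nonnegative and nonincreasing,
`(v_j - λ v_{j+1})² ≤ (1 - λ)² v_0² + (v_j² - v_{j+1}²)`, and the weighted telescoping sum
`∑ v_j² + ∑ (n - j - 1)(v_j² - v_{j+1}²)` equals `n v_0²`. The column norms `d_j` decrease in `j`,
which gives the first inequality; for `v = 1` the same formula evaluates `‖A C_λ⁻¹‖_F²` to
`n + (1 - λ)² n(n - 1)/2`, which turns the first inequality into the second.
-/

lemma sum_range_ite_le {M : Type*} [AddCommMonoid M] (g : ℕ → M) (m n : ℕ) :
    ∑ i ∈ range n, (if m ≤ i then g i else 0) = ∑ k ∈ range (n - m), g (m + k) := by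
  rw [← sum_filter, ← sum_Ico_eq_sum_range]
  congr 1
  ext i
  simp only [mem_filter, mem_range, mem_Ico]
  omega

lemma dcol_sq (n : ℕ) (l : ℝ) (j : Fin n) :
    dcol n l j ^ 2 = ∑ t ∈ range (n - j), (l ^ 2) ^ t := by
  rw [dcol, norm2, Real.sq_sqrt (by positivity)]
  unfold Cmat
  rw [Fin.sum_univ_eq_sum_range (fun i => (if (j : ℕ) ≤ i then l ^ (i - j) else 0) ^ 2)]
  simp only [ite_pow, zero_pow two_ne_zero, sum_range_ite_le, Nat.add_sub_cancel_left, ← pow_mul,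
    mul_comm 2]

-- `dcol` read off as a function of the column's ℕ-index (zero past the last column), so that
-- columns `j` and `j + 1` can be compared without bounds proofs.
noncomputable def dcolNat (n : ℕ) (l : ℝ) (m : ℕ) : ℝ := √(∑ t ∈ range (n - m), (l ^ 2) ^ t)

lemma dcol_eq_dcolNat (n : ℕ) (l : ℝ) : dcol n l = fun j : Fin n => dcolNat n l j := by
  ext j
  rw [dcolNat, ← dcol_sq]
  exact (Real.sqrt_sq (Real.sqrt_nonneg _)).symm

lemma dcolNat_antitone (n : ℕ) (l : ℝ) : Antitone (dcolNat n l) := fun _ _ hm =>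
  Real.sqrt_le_sqrt <| sum_le_sum_of_subset_of_nonneg (range_subset_range.2 (by omega))
    fun _ _ _ => by positivity

lemma Amat_mul_diagonal_mul_Cinvmat_apply (n : ℕ) (l : ℝ) (f : ℕ → ℝ) (i j : Fin n) :
    (Amat n * Matrix.diagonal (fun k : Fin n => f k) * Cinvmat n l) i j =
      (if (j : ℕ) ≤ i then f j else 0) - (if (j : ℕ) < i then l * f (j + 1) else 0) := by
  have hterm : ∀ k : ℕ, (if k ≤ i then (1 : ℝ) else 0) * f k *
      (if k = j then 1 else if k = j + 1 then -l else 0) =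
      (if k = j then (if (j : ℕ) ≤ i then f j else 0) else 0) -
        (if k = j + 1 then (if (j : ℕ) < i then l * f (j + 1) else 0) else 0) := by
    intro k
    split_ifs <;> (try subst_vars) <;> first | omega | ring
  rw [Matrix.mul_apply]
  simp only [Matrix.mul_diagonal, Amat, Cinvmat]
  rw [Fin.sum_univ_eq_sum_range (fun k => (if k ≤ i then (1 : ℝ) else 0) * f k *
      (if k = j then 1 else if k = j + 1 then -l else 0)), sum_congr rfl fun k _ => hterm k,
    sum_sub_distrib, sum_ite_eq', sum_ite_eq', if_pos (mem_range.2 j.2)]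
  by_cases hj : (j : ℕ) + 1 < n
  · rw [if_pos (mem_range.2 hj)]
  · have := i.2
    rw [if_neg (mt mem_range.1 hj), if_neg (show ¬(j : ℕ) < i by omega)]

lemma sum_sq_Amat_mul_diagonal_mul_Cinvmat_col (n : ℕ) (l : ℝ) (f : ℕ → ℝ) (j : Fin n) :
    ∑ i : Fin n, (Amat n * Matrix.diagonal (fun k : Fin n => f k) * Cinvmat n l) i j ^ 2 =
      f j ^ 2 + ((n : ℝ) - (j + 1)) * (f j - l * f (j + 1)) ^ 2 := by
  have hterm : ∀ i : ℕ,
      ((if (j : ℕ) ≤ i then f j else 0) - (if (j : ℕ) < i then l * f (j + 1) else 0)) ^ 2 =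
        (if (j : ℕ) = i then f j ^ 2 else 0) +
          (if (j : ℕ) + 1 ≤ i then (f j - l * f (j + 1)) ^ 2 else 0) := by
    intro i
    split_ifs <;> first | omega | ring
  simp only [Amat_mul_diagonal_mul_Cinvmat_apply]
  rw [Fin.sum_univ_eq_sum_range (fun i => ((if (j : ℕ) ≤ i then f j else 0) -
      (if (j : ℕ) < i then l * f (j + 1) else 0)) ^ 2), sum_congr rfl fun i _ => hterm i,
    sum_add_distrib, sum_ite_eq, if_pos (mem_range.2 j.2), sum_range_ite_le, sum_const,
    card_range, nsmul_eq_mul, Nat.cast_sub (by omega : (j : ℕ) + 1 ≤ n)]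
  push_cast
  ring

lemma frob_Amat_mul_diagonal_mul_Cinvmat_sq (n : ℕ) (l : ℝ) (f : ℕ → ℝ) :
    frob (Amat n * Matrix.diagonal (fun k : Fin n => f k) * Cinvmat n l) ^ 2 =
      ∑ j ∈ range n, f j ^ 2 + ∑ j ∈ range n, ((n : ℝ) - (j + 1)) * (f j - l * f (j + 1)) ^ 2 := by
  rw [frob, Real.sq_sqrt (by positivity), sum_comm,
    sum_congr rfl fun j _ => sum_sq_Amat_mul_diagonal_mul_Cinvmat_col n l f j,
    Fin.sum_univ_eq_sum_range
      (fun j => f j ^ 2 + ((n : ℝ) - (j + 1)) * (f j - l * f (j + 1)) ^ 2),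
    sum_add_distrib]

lemma sum_range_weight (n : ℕ) : ∑ j ∈ range n, ((n : ℝ) - (j + 1)) = n * (n - 1) / 2 := by
  induction n with
  | zero => simp
  | succ n ih =>
    have hshift : ∀ x : ℕ, ((n : ℝ) + 1 - (x + 1)) = ((n : ℝ) - (x + 1)) + 1 := fun _ => by ring
    rw [sum_range_succ, Nat.cast_succ]
    simp only [hshift, sum_add_distrib, ih, sum_const, card_range, nsmul_eq_mul, mul_one]
    ring

lemma frob_Amat_mul_Cinvmat_sq (n : ℕ) (l : ℝ) :
    frob (Amat n * Cinvmat n l) ^ 2 = n + (1 - l) ^ 2 * n * (n - 1) / 2 := by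
  have h := frob_Amat_mul_diagonal_mul_Cinvmat_sq n l fun _ => 1
  rw [Matrix.diagonal_one, Matrix.mul_one] at h
  rw [h, ← sum_mul, sum_range_weight]
  simp only [one_pow, mul_one, sum_const, card_range, nsmul_eq_mul]
  ring

lemma sum_range_add_sum_weighted_sub (g : ℕ → ℝ) (n : ℕ) :
    ∑ j ∈ range n, g j + ∑ j ∈ range n, ((n : ℝ) - (j + 1)) * (g j - g (j + 1)) = n * g 0 := by
  induction n with
  | zero => simp
  | succ n ih =>
    have hweight : ∑ j ∈ range (n + 1), ((↑(n + 1) : ℝ) - (j + 1)) * (g j - g (j + 1)) =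
        ∑ j ∈ range (n + 1), ((n : ℝ) - (j + 1)) * (g j - g (j + 1)) +
          ∑ j ∈ range (n + 1), (g j - g (j + 1)) := by
      rw [← sum_add_distrib]
      push_cast
      exact sum_congr rfl fun _ _ => by ring
    rw [hweight, sum_range_sub', sum_range_succ, sum_range_succ (fun j => ((n : ℝ) - (j + 1)) * _)]
    push_cast
    linear_combination ih

lemma sq_sub_mul_le {a b c L : ℝ} (hL : 0 ≤ L) (hb : 0 ≤ b) (hba : b ≤ a) (hbc : b ≤ c) :
    (a - L * b) ^ 2 ≤ (1 - L) ^ 2 * c ^ 2 + (a ^ 2 - b ^ 2) :=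
  calc (a - L * b) ^ 2 = (1 - L) ^ 2 * b ^ 2 + (a ^ 2 - b ^ 2) - 2 * (L * b) * (a - b) := by ring
    _ ≤ (1 - L) ^ 2 * b ^ 2 + (a ^ 2 - b ^ 2) := by
      have := mul_nonneg (mul_nonneg hL hb) (sub_nonneg.2 hba)
      linarith
    _ ≤ (1 - L) ^ 2 * c ^ 2 + (a ^ 2 - b ^ 2) := by gcongr

lemma sum_sq_add_sum_weighted_sq_le {f : ℕ → ℝ} (hf : Antitone f) (hf0 : ∀ m, 0 ≤ f m) {l : ℝ}
    (hl : 0 ≤ l) (n : ℕ) :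
    ∑ j ∈ range n, f j ^ 2 + ∑ j ∈ range n, ((n : ℝ) - (j + 1)) * (f j - l * f (j + 1)) ^ 2 ≤
      f 0 ^ 2 * (n + (1 - l) ^ 2 * n * (n - 1) / 2) := by
  have hterm : ∀ j ∈ range n, ((n : ℝ) - (j + 1)) * (f j - l * f (j + 1)) ^ 2 ≤
      ((n : ℝ) - (j + 1)) * ((1 - l) ^ 2 * f 0 ^ 2 + (f j ^ 2 - f (j + 1) ^ 2)) := by
    intro j hj
    have : (j : ℝ) + 1 ≤ n := by exact_mod_cast mem_range.1 hj
    exact mul_le_mul_of_nonneg_left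
      (sq_sub_mul_le hl (hf0 _) (hf j.le_succ) (hf (Nat.zero_le _))) (by linarith)
  calc _ ≤ ∑ j ∈ range n, f j ^ 2 +
        ∑ j ∈ range n, ((n : ℝ) - (j + 1)) * ((1 - l) ^ 2 * f 0 ^ 2 + (f j ^ 2 - f (j + 1) ^ 2)) :=
        add_le_add_right (sum_le_sum hterm) _
    _ = (1 - l) ^ 2 * f 0 ^ 2 * ∑ j ∈ range n, ((n : ℝ) - (j + 1)) +
        (∑ j ∈ range n, f j ^ 2 +
          ∑ j ∈ range n, ((n : ℝ) - (j + 1)) * (f j ^ 2 - f (j + 1) ^ 2)) := by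
      simp only [mul_add, sum_add_distrib, mul_sum, mul_comm ((n : ℝ) - _) ((1 - l) ^ 2 * f 0 ^ 2)]
      ring
    _ = _ := by
      rw [sum_range_weight, sum_range_add_sum_weighted_sub (fun j => f j ^ 2)]
      ring

lemma sum_range_pred_ite_weighted (n : ℕ) (F : ℕ → ℝ) :
    ∑ j ∈ range (n - 1), (if j + 1 < n then ((n : ℝ) - (j + 1)) * F j else 0) =
      ∑ j ∈ range n, ((n : ℝ) - (j + 1)) * F j := by
  cases n with
  | zero => simp
  | succ n =>
    rw [sum_range_succ, Nat.add_sub_cancel, Nat.cast_succ, sub_self, zero_mul, add_zero]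
    exact sum_congr rfl fun j hj => if_pos (by simpa using hj)

/-- ∑_j d_j² + ∑_{j=1}^{n−1}(n−j)(d_j − λd_{j+1})² ≤ d₁²(n + (1−λ)²n(n−1)/2),
and consequently the single-participation RMSE of the column-normalized DP-λCGD
factorization is at most that of the unnormalized one:
‖A D C_λ⁻¹‖_F ≤ d₁ · ‖A C_λ⁻¹‖_F. -/
theorem stmt_16 (n : ℕ) (hn : 1 ≤ n) (l : ℝ) (hl : l ∈ Set.Ioo (0 : ℝ) 1) :
    (∑ j : Fin n, dcol n l j ^ 2) +
      (∑ j ∈ Finset.range (n - 1), if h : j + 1 < n then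
        ((n : ℝ) - ((j : ℝ) + 1)) *
          (dcol n l ⟨j, by omega⟩ - l * dcol n l ⟨j + 1, h⟩) ^ 2 else 0) ≤
      dcol n l ⟨0, hn⟩ ^ 2 * ((n : ℝ) + (1 - l) ^ 2 * (n : ℝ) * ((n : ℝ) - 1) / 2) ∧
    frob (Amat n * Matrix.diagonal (dcol n l) * Cinvmat n l) ≤
      dcol n l ⟨0, hn⟩ * frob (Amat n * Cinvmat n l) := by
  have hbound := sum_sq_add_sum_weighted_sq_le (dcolNat_antitone n l)
    (fun _ => Real.sqrt_nonneg _) hl.1.le n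
  rw [dcol_eq_dcolNat]
  simp only [dite_eq_ite, sum_range_pred_ite_weighted,
    Fin.sum_univ_eq_sum_range (fun j => dcolNat n l j ^ 2)]
  refine ⟨hbound, le_of_sq_le_sq ?_ (mul_nonneg (Real.sqrt_nonneg _) (Real.sqrt_nonneg _))⟩
  rwa [frob_Amat_mul_diagonal_mul_Cinvmat_sq, mul_pow, frob_Amat_mul_Cinvmat_sq]
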